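/- Let K be a field, A a K-vector space, (μ_s)_{s∈ℕ} an associative deformation order by order, and let (ρ_s)_{s∈ℕ} and (ρ̃_s)_{s∈ℕ} be two right-module deformations of the same ρ_0 with respect to (μ_s), order by order at every order. Let r ∈ ℕ and T_0 = id_E, T_1, …, T_r ∈ End_K(E) be an equivalence up to order r: for all n ≤ r and a ∈ A, Σ_{s=0}^{n} T_s ∘ ρ_{n−s}(a) = Σ_{s=0}^{n} ρ̃_{n−s}(a) ∘ T_s. Define E_r : A → End_K(E) by E_r(a) = Σ_{s=0}^{r} ( ρ̃_{r+1−s}(a) ∘ T_s − T_s ∘ ρ_{r+1−s}(a) ). Then: (i) for any T_{r+1} ∈ End_K(E), the maps T_0, …, T_{r+1} form an equivalence up to order r+1 if and only if T_{r+1} ∘ ρ_0(a) − ρ_0(a) ∘ T_{r+1} = E_r(a) for all a ∈ A; and (ii) δE_r = 0, i.e. E_r(b) ∘ ρ_0(a) − E_r(μ_0(a,b)) + ρ_0(b) ∘ E_r(a) = 0 for all a,b ∈ A. -/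

import Mathlib

namespace Stmt10

variable {K A E : Type*} [Field K] [AddCommGroup A] [Module K A]
  [AddCommGroup E] [Module K E]

/-- The condition expressing associativity of a formal deformation `μ = ∑ λ^s μ_s`
in order `n`. -/
def AssocOrder {A : Type*} [AddCommGroup A] (μ : ℕ → A → A → A) (n : ℕ) : Prop :=
  ∀ a b c : A,
    ∑ s ∈ Finset.range (n+1), (μ s (μ (n-s) a b) c - μ s a (μ (n-s) b c)) = 0

/-- The obstruction `E_r(a) = ∑_{s=0}^{r} (ρ̃_{r+1−s}(a) ∘ T_s − T_s ∘ ρ_{r+1−s}(a))`. -/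
def Eobs (ρ ρ' : ℕ → A →ₗ[K] (E →ₗ[K] E)) (T : ℕ → E →ₗ[K] E) (r : ℕ)
    (a : A) : E →ₗ[K] E :=
  ∑ s ∈ Finset.range (r+1), ((ρ' (r+1-s) a) ∘ₗ (T s) - (T s) ∘ₗ (ρ (r+1-s) a))

/-!
Encode the sequences as power series over `End E`: `T̂ = ∑ T_s t^s` and `ρ̂(x) = ∑ ρ_s(x) t^s`.
The module axioms say `ρ̂(μ̂(a, b)) = ρ̂(b) ρ̂(a)`, so the defect `D(x) = T̂ ρ̂(x) - ρ̂'(x) T̂` obeys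
the Leibniz rule `D(μ̂(a, b)) = D(b) ρ̂(a) + ρ̂'(b) D(a)`. If `T` is an equivalence up to order `r`
and `T_{r+1} = U`, then `D(x)` starts in degree `r + 1` with coefficient
`U ρ_0(x) - ρ_0(x) U - E_r(x)`; this gives (i), and for `U = 0` the Leibniz rule in degree
`r + 1` is `δE_r = 0`.
-/

open Finset PowerSeries

section

variable {R α : Type*} [Ring R]

theorem sum_antidiagonal_eq_of_fst_lt {M : Type*} [AddCommMonoid M] {n : ℕ} {f : ℕ × ℕ → M}
    (hf : ∀ i < n, ∀ j, f (i, j) = 0) : ∑ p ∈ antidiagonal n, f p = f (n, 0) := by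
  refine sum_eq_single_of_mem (n, 0) (by simp) fun p hp hne => ?_
  have hp1 : p.1 < n := by
    rw [HasAntidiagonal.mem_antidiagonal] at hp
    by_contra! h
    exact hne (Prod.ext (by omega) (by omega))
  exact hf p.1 hp1 p.2

theorem coeff_mul_of_coeff_eq_zero_left {φ ψ : R⟦X⟧} {n : ℕ} (hφ : ∀ m < n, coeff m φ = 0) :
    coeff n (φ * ψ) = coeff n φ * coeff 0 ψ := by
  rw [coeff_mul, sum_antidiagonal_eq_of_fst_lt fun i hi j => by rw [hφ i hi, zero_mul]]

theorem coeff_mul_of_coeff_eq_zero_right {φ ψ : R⟦X⟧} {n : ℕ} (hψ : ∀ m < n, coeff m ψ = 0) :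
    coeff n (φ * ψ) = coeff 0 φ * coeff n ψ := by
  rw [coeff_mul, ← Nat.sum_antidiagonal_swap,
    sum_antidiagonal_eq_of_fst_lt fun i hi j => by simp [hψ i hi]]
  rfl

variable (μ : ℕ → α → α → α)

/-- `F(μ̂(a, b))` for `μ̂(a, b) = ∑ μ_k(a, b) t^k`, where `F` is extended by `F(y t^k) = t^k F(y)`. -/
noncomputable def compDeformation (F : α → R⟦X⟧) (a b : α) : R⟦X⟧ :=
  mk fun n => ∑ p ∈ antidiagonal n, coeff p.1 (F (μ p.2 a b))

def IsRightModuleDeformation (ρ : ℕ → α → R) : Prop :=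
  ∀ n a b, ∑ s ∈ range (n + 1), ρ s (μ (n - s) a b) = ∑ s ∈ range (n + 1), ρ s b * ρ (n - s) a

variable {μ}

theorem compDeformation_sub (F G : α → R⟦X⟧) (a b : α) :
    compDeformation μ (fun x => F x - G x) a b
      = compDeformation μ F a b - compDeformation μ G a b := by
  ext n
  simp only [compDeformation, coeff_mk, map_sub, sum_sub_distrib]

theorem compDeformation_const_mul (P : R⟦X⟧) (F : α → R⟦X⟧) (a b : α) :
    compDeformation μ (fun x => P * F x) a b = P * compDeformation μ F a b := by
  ext n
  simp only [compDeformation, coeff_mk, coeff_mul, mul_sum, sum_sigma']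
  apply sum_nbij' (fun ⟨⟨_, k⟩, ⟨i, l⟩⟩ ↦ ⟨(i, l + k), (l, k)⟩)
    (fun ⟨⟨i, _⟩, ⟨l, k⟩⟩ ↦ ⟨(i + l, k), (i, l)⟩) <;> aesop (add simp [add_assoc])

theorem compDeformation_mul_const (P : R⟦X⟧) (F : α → R⟦X⟧) (a b : α) :
    compDeformation μ (fun x => F x * P) a b = compDeformation μ F a b * P := by
  ext n
  simp only [compDeformation, coeff_mk, coeff_mul, sum_mul, sum_sigma']
  apply sum_nbij' (fun ⟨⟨_, k⟩, ⟨l, i⟩⟩ ↦ ⟨(l + k, i), (l, k)⟩)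
    (fun ⟨⟨_, i⟩, ⟨l, k⟩⟩ ↦ ⟨(l + i, k), (l, i)⟩) <;>
    aesop (add simp [add_assoc, add_comm, add_left_comm])

theorem coeff_compDeformation_of_coeff_eq_zero {F : α → R⟦X⟧} {n : ℕ}
    (hF : ∀ x, ∀ m < n, coeff m (F x) = 0) (a b : α) :
    coeff n (compDeformation μ F a b) = coeff n (F (μ 0 a b)) := by
  rw [compDeformation, coeff_mk, sum_antidiagonal_eq_of_fst_lt fun i hi j => hF _ i hi]

theorem IsRightModuleDeformation.compDeformation_eq {ρ : ℕ → α → R}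
    (hρ : IsRightModuleDeformation μ ρ) (a b : α) :
    compDeformation μ (fun x => mk (ρ · x)) a b = mk (ρ · b) * mk (ρ · a) := by
  ext n
  simp only [compDeformation, coeff_mk, coeff_mul]
  rw [Nat.sum_antidiagonal_eq_sum_range_succ (fun i j => ρ i (μ j a b)),
    Nat.sum_antidiagonal_eq_sum_range_succ (fun i j => ρ i b * ρ j a)]
  exact hρ n a b

end

section

variable {R α : Type*} [Ring R] (ρ ρ' : ℕ → α → R) (T : ℕ → R)

def IsEquivUpTo (r : ℕ) : Prop :=
  ∀ n ≤ r, ∀ x, ∑ s ∈ range (n + 1), T s * ρ (n - s) x = ∑ s ∈ range (n + 1), ρ' (n - s) x * T s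

def defect (n : ℕ) (x : α) : R :=
  ∑ s ∈ range (n + 1), (T s * ρ (n - s) x - ρ' (n - s) x * T s)

def obstruction (r : ℕ) (x : α) : R :=
  ∑ s ∈ range (r + 1), (ρ' (r + 1 - s) x * T s - T s * ρ (r + 1 - s) x)

noncomputable def defectSeries (x : α) : R⟦X⟧ :=
  mk T * mk (ρ · x) - mk (ρ' · x) * mk T

theorem isEquivUpTo_iff_defect_eq_zero (r : ℕ) :
    IsEquivUpTo ρ ρ' T r ↔ ∀ n ≤ r, ∀ x, defect ρ ρ' T n x = 0 := by
  simp only [IsEquivUpTo, defect, sum_sub_distrib, sub_eq_zero]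

theorem coeff_defectSeries (n : ℕ) (x : α) :
    coeff n (defectSeries ρ ρ' T x) = defect ρ ρ' T n x := by
  rw [defectSeries, map_sub, coeff_mul, coeff_mul, defect, sum_sub_distrib]
  congr 1
  · rw [Nat.sum_antidiagonal_eq_sum_range_succ_mk]
    simp only [coeff_mk]
  · rw [← Nat.sum_antidiagonal_swap, Nat.sum_antidiagonal_eq_sum_range_succ_mk]
    simp only [coeff_mk, Prod.swap]

theorem defect_ite_of_le (U : R) {r n : ℕ} (hn : n ≤ r) (x : α) :
    defect ρ ρ' (fun s => if s = r + 1 then U else T s) n x = defect ρ ρ' T n x :=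
  sum_congr rfl fun s hs => by
    simp only [if_neg (show s ≠ r + 1 by rw [mem_range] at hs; omega)]

theorem defect_ite_succ (U : R) (r : ℕ) (x : α) :
    defect ρ ρ' (fun s => if s = r + 1 then U else T s) (r + 1) x
      = U * ρ 0 x - ρ' 0 x * U - obstruction ρ ρ' T r x := by
  rw [defect, sum_range_succ, if_pos rfl, Nat.sub_self, obstruction,
    sub_eq_add_neg (U * ρ 0 x - ρ' 0 x * U), ← sum_neg_distrib, add_comm]
  congr 1
  refine sum_congr rfl fun s hs => ?_
  rw [if_neg (show s ≠ r + 1 by rw [mem_range] at hs; omega), neg_sub]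

variable {ρ ρ' T}

theorem isEquivUpTo_ite_succ_iff (h0 : ρ' 0 = ρ 0) {r : ℕ} (hT : IsEquivUpTo ρ ρ' T r) (U : R) :
    IsEquivUpTo ρ ρ' (fun s => if s = r + 1 then U else T s) (r + 1)
      ↔ ∀ x, U * ρ 0 x - ρ 0 x * U = obstruction ρ ρ' T r x := by
  rw [isEquivUpTo_iff_defect_eq_zero] at hT ⊢
  refine ⟨fun h x => ?_, fun h n hn x => ?_⟩
  · have hx := h (r + 1) le_rfl x
    rwa [defect_ite_succ, h0, sub_eq_zero] at hx
  · obtain hn | rfl := Nat.le_add_one_iff.mp hn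
    · rw [defect_ite_of_le ρ ρ' T U hn, hT n hn x]
    · rw [defect_ite_succ, h0, h x, sub_self]

theorem compDeformation_defectSeries {μ : ℕ → α → α → α}
    (hρ : IsRightModuleDeformation μ ρ) (hρ' : IsRightModuleDeformation μ ρ') (a b : α) :
    compDeformation μ (defectSeries ρ ρ' T) a b
      = defectSeries ρ ρ' T b * mk (ρ · a) + mk (ρ' · b) * defectSeries ρ ρ' T a := by
  unfold defectSeries
  rw [compDeformation_sub, compDeformation_const_mul, compDeformation_mul_const,
    hρ.compDeformation_eq, hρ'.compDeformation_eq]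
  noncomm_ring

theorem obstruction_isCocycle {μ : ℕ → α → α → α}
    (hρ : IsRightModuleDeformation μ ρ) (hρ' : IsRightModuleDeformation μ ρ') (h0 : ρ' 0 = ρ 0)
    {r : ℕ} (hT : IsEquivUpTo ρ ρ' T r) (a b : α) :
    obstruction ρ ρ' T r b * ρ 0 a - obstruction ρ ρ' T r (μ 0 a b)
      + ρ 0 b * obstruction ρ ρ' T r a = 0 := by
  have hlow : ∀ x, ∀ m < r + 1,
      coeff m (defectSeries ρ ρ' (fun s => if s = r + 1 then 0 else T s) x) = 0 := fun x m hm => by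
    rw [coeff_defectSeries, defect_ite_of_le ρ ρ' T 0 (Nat.lt_succ_iff.mp hm)]
    exact (isEquivUpTo_iff_defect_eq_zero ρ ρ' T r).mp hT m (Nat.lt_succ_iff.mp hm) x
  have htop : ∀ x, coeff (r + 1) (defectSeries ρ ρ' (fun s => if s = r + 1 then 0 else T s) x)
      = -obstruction ρ ρ' T r x := fun x => by
    rw [coeff_defectSeries, defect_ite_succ, zero_mul, mul_zero, sub_self, zero_sub]
  have key := congrArg (coeff (r + 1))
    (compDeformation_defectSeries (T := fun s => if s = r + 1 then 0 else T s) hρ hρ' a b)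
  rw [coeff_compDeformation_of_coeff_eq_zero hlow, map_add,
    coeff_mul_of_coeff_eq_zero_left (hlow b), coeff_mul_of_coeff_eq_zero_right (hlow a),
    htop, htop, htop, coeff_mk, coeff_mk, h0] at key
  rw [← neg_neg (obstruction ρ ρ' T r (μ 0 a b)), key]
  noncomm_ring

end

theorem equivalence_obstruction_module_general
    (μ : ℕ → A →ₗ[K] A →ₗ[K] A)
    (ρ ρ' : ℕ → A →ₗ[K] (E →ₗ[K] E))
    (h0 : ρ' 0 = ρ 0)
    (hρ : ∀ n, ∀ a b : A,
      ∑ s ∈ Finset.range (n+1), ρ s (μ (n-s) a b)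
        = ∑ s ∈ Finset.range (n+1), (ρ s b) ∘ₗ (ρ (n-s) a))
    (hρ' : ∀ n, ∀ a b : A,
      ∑ s ∈ Finset.range (n+1), ρ' s (μ (n-s) a b)
        = ∑ s ∈ Finset.range (n+1), (ρ' s b) ∘ₗ (ρ' (n-s) a))
    (r : ℕ) (T : ℕ → E →ₗ[K] E)
    (hT : ∀ n ≤ r, ∀ a : A,
      ∑ s ∈ Finset.range (n+1), (T s) ∘ₗ (ρ (n-s) a)
        = ∑ s ∈ Finset.range (n+1), (ρ' (n-s) a) ∘ₗ (T s)) :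
    (∀ U : E →ₗ[K] E,
      (∀ n ≤ r + 1, ∀ a : A,
        ∑ s ∈ Finset.range (n+1),
            ((if s = r+1 then U else T s) ∘ₗ (ρ (n-s) a))
          = ∑ s ∈ Finset.range (n+1),
              ((ρ' (n-s) a) ∘ₗ (if s = r+1 then U else T s)))
        ↔ (∀ a : A, U ∘ₗ (ρ 0 a) - (ρ 0 a) ∘ₗ U = Eobs ρ ρ' T r a))
    ∧ (∀ a b : A,
        (Eobs ρ ρ' T r b) ∘ₗ (ρ 0 a) - Eobs ρ ρ' T r (μ 0 a b)
          + (ρ 0 b) ∘ₗ (Eobs ρ ρ' T r a) = 0) := by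
  let ρ₁ : ℕ → A → Module.End K E := fun s x => ρ s x
  let ρ₁' : ℕ → A → Module.End K E := fun s x => ρ' s x
  have h0' : ρ₁' 0 = ρ₁ 0 := funext fun x => by simp only [ρ₁, ρ₁', h0]
  have hT' : IsEquivUpTo ρ₁ ρ₁' T r := hT
  exact ⟨fun U => isEquivUpTo_ite_succ_iff h0' hT' U,
    obstruction_isCocycle (μ := fun s x y => μ s x y) hρ hρ' h0' hT'⟩

/-- Obstruction theory for equivalences of right-module deformations:
if `T_0 = id, T_1, …, T_r` form an equivalence up to order `r` between two module
deformations `(ρ_s)` and `(ρ̃_s)` of the same `ρ_0`, then (i) `T_0, …, T_{r+1}` form an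
equivalence up to order `r+1` iff `δT_{r+1} = E_r`, and (ii) `δE_r = 0`. -/
theorem equivalence_obstruction_module
    (μ : ℕ → A →ₗ[K] A →ₗ[K] A)
    (hμ : ∀ n, AssocOrder (fun s x y => μ s x y) n)
    (ρ ρ' : ℕ → A →ₗ[K] (E →ₗ[K] E))
    (h0 : ρ' 0 = ρ 0)
    (hρ : ∀ n, ∀ a b : A,
      ∑ s ∈ Finset.range (n+1), ρ s (μ (n-s) a b)
        = ∑ s ∈ Finset.range (n+1), (ρ s b) ∘ₗ (ρ (n-s) a))
    (hρ' : ∀ n, ∀ a b : A,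
      ∑ s ∈ Finset.range (n+1), ρ' s (μ (n-s) a b)
        = ∑ s ∈ Finset.range (n+1), (ρ' s b) ∘ₗ (ρ' (n-s) a))
    (r : ℕ) (T : ℕ → E →ₗ[K] E) (hT0 : T 0 = LinearMap.id)
    (hT : ∀ n ≤ r, ∀ a : A,
      ∑ s ∈ Finset.range (n+1), (T s) ∘ₗ (ρ (n-s) a)
        = ∑ s ∈ Finset.range (n+1), (ρ' (n-s) a) ∘ₗ (T s)) :
    (∀ U : E →ₗ[K] E,
      (∀ n ≤ r + 1, ∀ a : A,
        ∑ s ∈ Finset.range (n+1),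
            ((if s = r+1 then U else T s) ∘ₗ (ρ (n-s) a))
          = ∑ s ∈ Finset.range (n+1),
              ((ρ' (n-s) a) ∘ₗ (if s = r+1 then U else T s)))
        ↔ (∀ a : A, U ∘ₗ (ρ 0 a) - (ρ 0 a) ∘ₗ U = Eobs ρ ρ' T r a))
    ∧ (∀ a b : A,
        (Eobs ρ ρ' T r b) ∘ₗ (ρ 0 a) - Eobs ρ ρ' T r (μ 0 a b)
          + (ρ 0 b) ∘ₗ (Eobs ρ ρ' T r a) = 0) :=
  equivalence_obstruction_module_general μ ρ ρ' h0 hρ hρ' r T hT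

end Stmt10
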